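/- Let (X,d) be a complete metric space, k ∈ [0,1), and T : X → X a mapping satisfying ψ(d(Tx,Ty)) ≤ k·ψ(M(x,y)) for all x, y ∈ X, where M(x,y) = max{d(x,y), d(x,Tx), d(y,Ty), (d(x,Ty)+d(y,Tx))/2} and ψ is an altering distance function. Then T has a unique fixed point. -/

import Mathlib

/-!
The contractive condition forces `d(Tx, Ty) < M(x, y)` whenever `M(x, y) > 0`. Along a Picard
orbit `M(xₙ, xₙ₊₁) ≤ max(d(xₙ, xₙ₊₁), d(xₙ₊₁, xₙ₊₂))`, so the step lengths decrease, and passing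
to the limit in `ψ(dₙ₊₁) ≤ k ψ(dₙ)` (continuity of `ψ`) shows that they tend to `0`. Every
argument then has the same shape: two sequences of asymptotically regular points at limiting
distance `ε` have `M → ε` and `d(T·, T·) → ε`, so `ψ(ε) ≤ k ψ(ε)` and `ε = 0`. If the orbit were not
Cauchy, the usual minimal-index construction would produce such sequences with `ε > 0`; the limit
of the orbit is fixed by the same limit argument, and two fixed points `a, b` have
`M(a, b) = d(a, b)`.
-/

open Filter Topology

structure IsAlteringDistance (ψ : ℝ → ℝ) : Prop where
  continuousOn : ContinuousOn ψ (Set.Ici 0)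
  monotoneOn : MonotoneOn ψ (Set.Ici 0)
  eq_zero_iff : ∀ t, 0 ≤ t → (ψ t = 0 ↔ t = 0)

namespace IsAlteringDistance

variable {ψ : ℝ → ℝ} {k s t : ℝ}

theorem nonneg (hψ : IsAlteringDistance ψ) (ht : 0 ≤ t) : 0 ≤ ψ t := by
  have h0 : ψ 0 = 0 := (hψ.eq_zero_iff 0 le_rfl).mpr rfl
  simpa [h0] using hψ.monotoneOn Set.self_mem_Ici ht ht

theorem pos (hψ : IsAlteringDistance ψ) (ht : 0 < t) : 0 < ψ t :=
  (hψ.nonneg ht.le).lt_of_ne' fun h => ht.ne' ((hψ.eq_zero_iff t ht.le).mp h)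

theorem lt_of_le_mul (hψ : IsAlteringDistance ψ) (hk : k < 1) (ht : 0 < t)
    (h : ψ s ≤ k * ψ t) : s < t := by
  by_contra! hts
  have := hψ.monotoneOn ht.le (ht.le.trans hts) hts
  nlinarith [mul_pos (sub_pos.2 hk) (hψ.pos ht)]

theorem eq_zero_of_le_mul_self (hψ : IsAlteringDistance ψ) (hk : k < 1) (ht : 0 ≤ t)
    (h : ψ t ≤ k * ψ t) : t = 0 :=
  ht.eq_or_lt.elim Eq.symm fun ht' => absurd (hψ.lt_of_le_mul hk ht' h) (lt_irrefl t)

theorem tendsto_comp (hψ : IsAlteringDistance ψ) {ι : Type*} {l : Filter ι} {a : ι → ℝ}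
    (ha0 : ∀ j, 0 ≤ a j) (ha : Tendsto a l (𝓝 s)) (hs : 0 ≤ s) :
    Tendsto (ψ ∘ a) l (𝓝 (ψ s)) :=
  (hψ.continuousOn s hs).tendsto.comp (tendsto_nhdsWithin_iff.mpr ⟨ha, .of_forall ha0⟩)

theorem le_mul_of_tendsto (hψ : IsAlteringDistance ψ) {ι : Type*} {l : Filter ι} [l.NeBot]
    {a b : ι → ℝ} (ha0 : ∀ j, 0 ≤ a j) (hb0 : ∀ j, 0 ≤ b j)
    (ha : Tendsto a l (𝓝 s)) (hb : Tendsto b l (𝓝 t)) (h : ∀ j, ψ (a j) ≤ k * ψ (b j)) :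
    ψ s ≤ k * ψ t :=
  le_of_tendsto_of_tendsto' (hψ.tendsto_comp ha0 ha (ge_of_tendsto' ha ha0))
    ((hψ.tendsto_comp hb0 hb (ge_of_tendsto' hb hb0)).const_mul k) h

end IsAlteringDistance

section PseudoMetric

variable {X : Type*} [PseudoMetricSpace X]

theorem tendsto_dist_of_tendsto_dist_zero {ι : Type*} {l : Filter ι} {x x' y y' : ι → X}
    {ε : ℝ} (hxy : Tendsto (fun j => dist (x j) (y j)) l (𝓝 ε))
    (hx : Tendsto (fun j => dist (x j) (x' j)) l (𝓝 0))
    (hy : Tendsto (fun j => dist (y j) (y' j)) l (𝓝 0)) :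
    Tendsto (fun j => dist (x' j) (y' j)) l (𝓝 ε) :=
  tendsto_of_tendsto_of_dist hxy <| squeeze_zero (fun _ => dist_nonneg)
    (fun j => dist_dist_dist_le (x j) (y j) (x' j) (y' j)) (by simpa using hx.add hy)

theorem exists_tendsto_dist_of_not_cauchySeq {u : ℕ → X}
    (hu : Tendsto (fun n => dist (u n) (u (n + 1))) atTop (𝓝 0)) (hc : ¬CauchySeq u) :
    ∃ ε > 0, ∃ q : ℕ → ℕ, Tendsto q atTop atTop ∧
      Tendsto (fun j => dist (u (q j)) (u j)) atTop (𝓝 ε) := by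
  classical
  rw [Metric.cauchySeq_iff'] at hc
  push Not at hc
  obtain ⟨ε, hε, hex⟩ := hc
  -- `q j` is the first index `n ≥ j` with `u n` outside the `ε`-ball around `u j`,
  -- so `u (q j - 1)` is still inside it.
  let q j := Nat.find (hex j)
  have hq_spec j : j ≤ q j ∧ ε ≤ dist (u (q j)) (u j) := Nat.find_spec (hex j)
  have hq_gt j : j < q j := (hq_spec j).1.lt_of_ne fun h => by
    have := (hq_spec j).2
    rw [← h, dist_self] at this
    linarith
  have hq_pred j : dist (u (q j - 1)) (u j) < ε := by
    have := Nat.find_min (hex j) (show q j - 1 < q j by have := hq_gt j; omega)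
    push Not at this
    exact this (by have := hq_gt j; omega)
  have hq_le j : dist (u (q j)) (u j) ≤ ε + dist (u (q j - 1)) (u (q j - 1 + 1)) := by
    have := dist_triangle (u (q j)) (u (q j - 1)) (u j)
    rw [show q j - 1 + 1 = q j by have := hq_gt j; omega, dist_comm (u (q j - 1))]
    linarith [hq_pred j]
  have hpred_top : Tendsto (fun j => q j - 1) atTop atTop :=
    tendsto_atTop_mono (fun j => show j ≤ q j - 1 by have := hq_gt j; omega) tendsto_id
  refine ⟨ε, hε, q, tendsto_atTop_mono (fun j => (hq_gt j).le) tendsto_id, ?_⟩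
  refine tendsto_of_tendsto_of_tendsto_of_le_of_le tendsto_const_nhds ?_
    (fun j => (hq_spec j).2) hq_le
  simpa using (hu.comp hpred_top).const_add ε

/-- The quantity `M(x, y)` of the contractive condition. -/
noncomputable def contractionBound (T : X → X) (x y : X) : ℝ :=
  max (max (dist x y) (dist x (T x))) (max (dist y (T y)) ((dist x (T y) + dist y (T x)) / 2))

theorem contractionBound_nonneg (T : X → X) (x y : X) : 0 ≤ contractionBound T x y :=
  le_max_of_le_left (le_max_of_le_left dist_nonneg)

theorem dist_map_le_contractionBound_map (T : X → X) (x : X) :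
    dist (T x) (T (T x)) ≤ contractionBound T x (T x) :=
  le_max_of_le_right (le_max_left _ _)

theorem contractionBound_map_le (T : X → X) (x : X) :
    contractionBound T x (T x) ≤ max (dist x (T x)) (dist (T x) (T (T x))) := by
  have := dist_triangle x (T x) (T (T x))
  have := le_max_left (dist x (T x)) (dist (T x) (T (T x)))
  have := le_max_right (dist x (T x)) (dist (T x) (T (T x)))
  simp only [contractionBound, dist_self, add_zero, max_self]
  exact max_le (le_max_left _ _) (max_le (le_max_right _ _) (by linarith))

theorem tendsto_contractionBound (T : X → X) {ι : Type*} {l : Filter ι} {x y : ι → X} {ε : ℝ}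
    (hε : 0 ≤ ε) (hx : Tendsto (fun j => dist (x j) (T (x j))) l (𝓝 0))
    (hy : Tendsto (fun j => dist (y j) (T (y j))) l (𝓝 0))
    (hxy : Tendsto (fun j => dist (x j) (y j)) l (𝓝 ε)) :
    Tendsto (fun j => contractionBound T (x j) (y j)) l (𝓝 ε) := by
  have hconst (z : ι → X) : Tendsto (fun j => dist (z j) (z j)) l (𝓝 0) := by
    simpa using tendsto_const_nhds
  have hyx : Tendsto (fun j => dist (y j) (x j)) l (𝓝 ε) := by simpa only [dist_comm] using hxy
  have hxTy := tendsto_dist_of_tendsto_dist_zero hxy (hconst x) hy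
  have hyTx := tendsto_dist_of_tendsto_dist_zero hyx (hconst y) hx
  have h := (hxy.max hx).max (hy.max ((hxTy.add hyTx).div_const 2))
  rwa [add_self_div_two, max_eq_left hε, max_eq_right hε, max_self] at h

def IsAlteringContraction (ψ : ℝ → ℝ) (k : ℝ) (T : X → X) : Prop :=
  ∀ x y, ψ (dist (T x) (T y)) ≤ k * ψ (contractionBound T x y)

end PseudoMetric

namespace IsAlteringContraction

section PseudoMetric

variable {X : Type*} [PseudoMetricSpace X] {ψ : ℝ → ℝ} {k : ℝ} {T : X → X}

theorem dist_map_map_le (hT : IsAlteringContraction ψ k T) (hψ : IsAlteringDistance ψ)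
    (hk1 : k < 1) (x : X) : dist (T x) (T (T x)) ≤ dist x (T x) := by
  by_contra! h
  have hM := contractionBound_map_le T x
  rw [max_eq_right h.le] at hM
  have hpos := (dist_nonneg.trans_lt h).trans_le (dist_map_le_contractionBound_map T x)
  exact (hψ.lt_of_le_mul hk1 hpos (hT x (T x))).not_ge hM

theorem psi_dist_map_map_le (hT : IsAlteringContraction ψ k T) (hψ : IsAlteringDistance ψ)
    (hk0 : 0 ≤ k) (hk1 : k < 1) (x : X) :
    ψ (dist (T x) (T (T x))) ≤ k * ψ (dist x (T x)) := by
  have hM := contractionBound_map_le T x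
  rw [max_eq_left (hT.dist_map_map_le hψ hk1 x)] at hM
  exact (hT x (T x)).trans <| mul_le_mul_of_nonneg_left
    (hψ.monotoneOn (contractionBound_nonneg T x (T x)) dist_nonneg hM) hk0

theorem tendsto_dist_iterate_map_zero (hT : IsAlteringContraction ψ k T)
    (hψ : IsAlteringDistance ψ) (hk0 : 0 ≤ k) (hk1 : k < 1) (x : X) :
    Tendsto (fun n => dist (T^[n] x) (T (T^[n] x))) atTop (𝓝 0) := by
  set d := fun n => dist (T^[n] x) (T (T^[n] x))
  have hsucc n : d (n + 1) = dist (T (T^[n] x)) (T (T (T^[n] x))) := by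
    simp only [d, Function.iterate_succ_apply']
  have hanti : Antitone d :=
    antitone_nat_of_succ_le fun n => (hsucc n).trans_le (hT.dist_map_map_le hψ hk1 _)
  have hlim := tendsto_atTop_ciInf hanti ⟨0, by rintro _ ⟨n, rfl⟩; exact dist_nonneg⟩
  have hinf : ⨅ n, d n = 0 :=
    hψ.eq_zero_of_le_mul_self hk1 (le_ciInf fun _ => dist_nonneg) <|
      hψ.le_mul_of_tendsto (fun _ => dist_nonneg) (fun _ => dist_nonneg)
        (hlim.comp (tendsto_add_atTop_nat 1)) hlim fun n => by
          simpa only [Function.iterate_succ_apply'] using hT.psi_dist_map_map_le hψ hk0 hk1 _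
  rwa [hinf] at hlim

theorem eq_zero_of_tendsto_dist (hT : IsAlteringContraction ψ k T) (hψ : IsAlteringDistance ψ)
    (hk1 : k < 1) {ι : Type*} {l : Filter ι} [l.NeBot] {x y : ι → X} {ε : ℝ}
    (hx : Tendsto (fun j => dist (x j) (T (x j))) l (𝓝 0))
    (hy : Tendsto (fun j => dist (y j) (T (y j))) l (𝓝 0))
    (hxy : Tendsto (fun j => dist (x j) (y j)) l (𝓝 ε)) : ε = 0 := by
  have hε : 0 ≤ ε := ge_of_tendsto' hxy fun _ => dist_nonneg
  exact hψ.eq_zero_of_le_mul_self hk1 hε <|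
    hψ.le_mul_of_tendsto (fun _ => dist_nonneg) (fun _ => contractionBound_nonneg T _ _)
      (tendsto_dist_of_tendsto_dist_zero hxy hx hy) (tendsto_contractionBound T hε hx hy hxy)
      fun j => hT (x j) (y j)

theorem cauchySeq_iterate (hT : IsAlteringContraction ψ k T) (hψ : IsAlteringDistance ψ)
    (hk0 : 0 ≤ k) (hk1 : k < 1) (x : X) : CauchySeq fun n => T^[n] x := by
  by_contra hc
  have hd := hT.tendsto_dist_iterate_map_zero hψ hk0 hk1 x
  obtain ⟨ε, hε, q, hq, hqε⟩ := exists_tendsto_dist_of_not_cauchySeq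
    (by simpa only [Function.iterate_succ_apply'] using hd) hc
  exact hε.ne' (hT.eq_zero_of_tendsto_dist hψ hk1 (hd.comp hq) hd hqε)

end PseudoMetric

section Metric

variable {X : Type*} [MetricSpace X] {ψ : ℝ → ℝ} {k : ℝ} {T : X → X}

theorem isFixedPt_of_tendsto_iterate (hT : IsAlteringContraction ψ k T)
    (hψ : IsAlteringDistance ψ) (hk0 : 0 ≤ k) (hk1 : k < 1) {x a : X}
    (ha : Tendsto (fun n => T^[n] x) atTop (𝓝 a)) : Function.IsFixedPt T a := by
  set u := fun n => T^[n] x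
  set c := dist a (T a)
  have hd := hT.tendsto_dist_iterate_map_zero hψ hk0 hk1 x
  have hTu : Tendsto (fun n => T (u n)) atTop (𝓝 a) := by
    simpa only [Function.comp_def, u, Function.iterate_succ_apply'] using ha.comp (tendsto_add_atTop_nat 1)
  have hau : Tendsto (fun n => dist a (u n)) atTop (𝓝 0) := by
    simpa using (tendsto_const_nhds (x := a)).dist ha
  have haTu : Tendsto (fun n => dist a (T (u n))) atTop (𝓝 0) := by
    simpa using (tendsto_const_nhds (x := a)).dist hTu
  have huTa : Tendsto (fun n => dist (u n) (T a)) atTop (𝓝 c) := by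
    simpa [c, dist_comm] using ha.dist (tendsto_const_nhds (x := T a))
  have hM : Tendsto (fun n => contractionBound T a (u n)) atTop (𝓝 c) := by
    have h := (hau.max (tendsto_const_nhds (x := c))).max (hd.max ((haTu.add huTa).div_const 2))
    rwa [zero_add, max_eq_right dist_nonneg, max_eq_right (div_nonneg dist_nonneg zero_le_two),
      max_eq_left (half_le_self_iff.2 dist_nonneg)] at h
  have hTaTu : Tendsto (fun n => dist (T a) (T (u n))) atTop (𝓝 c) := by
    simpa [c, dist_comm] using tendsto_const_nhds.dist hTu
  have hc : c = 0 := hψ.eq_zero_of_le_mul_self hk1 dist_nonneg <|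
    hψ.le_mul_of_tendsto (fun _ => dist_nonneg) (fun _ => contractionBound_nonneg T _ _)
      hTaTu hM fun n => hT a (u n)
  exact (dist_eq_zero.mp hc).symm

theorem eq_of_isFixedPt (hT : IsAlteringContraction ψ k T) (hψ : IsAlteringDistance ψ)
    (hk1 : k < 1) {a b : X} (ha : Function.IsFixedPt T a) (hb : Function.IsFixedPt T b) :
    a = b := by
  have h := hT a b
  have hM : contractionBound T a b = dist a b := by
    simp only [contractionBound, ha.eq, hb.eq, dist_self, dist_comm b a, add_self_div_two,
      max_eq_left dist_nonneg, max_eq_right dist_nonneg, max_self]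
  rw [hM, ha.eq, hb.eq] at h
  exact dist_eq_zero.mp (hψ.eq_zero_of_le_mul_self hk1 dist_nonneg h)

end Metric

end IsAlteringContraction

theorem stmt_11_general {X : Type*} [MetricSpace X] [CompleteSpace X] [Nonempty X]
    (k : ℝ) (hk : k ∈ Set.Ico (0:ℝ) 1)
    (ψ : ℝ → ℝ)
    (hψc : ContinuousOn ψ (Set.Ici 0)) (hψm : MonotoneOn ψ (Set.Ici 0))
    (hψ0 : ∀ t, 0 ≤ t → (ψ t = 0 ↔ t = 0))
    (T : X → X)
    (hT : ∀ x y : X,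
      ψ (dist (T x) (T y)) ≤
        k * ψ (max (max (dist x y) (dist x (T x)))
            (max (dist y (T y)) ((dist x (T y) + dist y (T x)) / 2)))) :
    ∃! a : X, T a = a := by
  obtain ⟨x⟩ := ‹Nonempty X›
  have hψ : IsAlteringDistance ψ := ⟨hψc, hψm, hψ0⟩
  have hT : IsAlteringContraction ψ k T := hT
  obtain ⟨a, ha⟩ := cauchySeq_tendsto_of_complete (hT.cauchySeq_iterate hψ hk.1 hk.2 x)
  have hfix := hT.isFixedPt_of_tendsto_iterate hψ hk.1 hk.2 ha
  exact ⟨a, hfix, fun b hb => hT.eq_of_isFixedPt hψ hk.2 hb hfix⟩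

theorem stmt_11 {X : Type*} [MetricSpace X] [CompleteSpace X] [Nonempty X]
    (k : ℝ) (hk : k ∈ Set.Ico (0:ℝ) 1)
    (ψ : ℝ → ℝ)
    (hψc : ContinuousOn ψ (Set.Ici 0)) (hψm : MonotoneOn ψ (Set.Ici 0))
    (hψnn : ∀ t, 0 ≤ t → 0 ≤ ψ t) (hψ0 : ∀ t, 0 ≤ t → (ψ t = 0 ↔ t = 0))
    (T : X → X)
    (hT : ∀ x y : X,
      ψ (dist (T x) (T y)) ≤
        k * ψ (max (max (dist x y) (dist x (T x)))
            (max (dist y (T y)) ((dist x (T y) + dist y (T x)) / 2)))) :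
    ∃! a : X, T a = a :=
  stmt_11_general k hk ψ hψc hψm hψ0 T hT
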